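/- Let F be a structure tensor in W₂ and define L₂(F)(x,y,z) = F(φ²y,φ²x,ξ)η(z) + F(φ²z,φ²x,ξ)η(y). Then L₂ maps W₂ to W₂, L₂∘L₂ = id on W₂, and L₁∘L₂ = L₂∘L₁ where L₁(F)(x,y,z) = F(φx,φy,ξ)η(z) + F(φx,φz,ξ)η(y). -/

import Mathlib

/-!
Everything reduces to evaluating at `ξ`: since `φ ξ = 0` and `η ∘ φ = 0`,
`L₂ f (a, b, ξ) = f (φ²b, φ²a, ξ)`, while `φ³ = -φ` makes `f (φ³a, φ³b, c) = f (φa, φb, c)` and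
`f (φ⁴a, φ⁴b, c) = f (φ²a, φ²b, c)` for `f` linear in its first two arguments. Applying `L₂`
twice therefore returns `f (φ²x, φ²y, ξ) η z + f (φ²x, φ²z, ξ) η y`, which is `f` by the `W₂`
condition.
-/

namespace AlmostContact

variable {R V : Type*} [CommRing R] [AddCommGroup V] [Module R V]
  (φ : V →ₗ[R] V) (ξ : V) (η : V →ₗ[R] R)

def L₁ (f : V → V → V → R) : V → V → V → R :=
  fun x y z => f (φ x) (φ y) ξ * η z + f (φ x) (φ z) ξ * η y

def L₂ (f : V → V → V → R) : V → V → V → R :=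
  fun x y z => f (φ (φ y)) (φ (φ x)) ξ * η z + f (φ (φ z)) (φ (φ x)) ξ * η y

variable {φ ξ η}

theorem phi_phi_phi (hφ2 : ∀ x, φ (φ x) = -x + η x • ξ) (hηφ : ∀ x, η (φ x) = 0) (x : V) :
    φ (φ (φ x)) = -φ x := by
  rw [hφ2, hηφ, zero_smul, add_zero]

section Trilinear

variable {f : V → V → V → R}

theorem apply_neg_neg (hf1 : ∀ b c, IsLinearMap R (fun a => f a b c))
    (hf2 : ∀ a c, IsLinearMap R (fun b => f a b c)) (a b c : V) :
    f (-a) (-b) c = f a b c := by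
  rw [(hf1 (-b) c).map_neg, (hf2 a c).map_neg, neg_neg]

theorem L₂_apply_xi (hφξ : φ ξ = 0) (hηξ : η ξ = 1)
    (hf1 : ∀ b c, IsLinearMap R (fun a => f a b c)) (a b : V) :
    L₂ φ ξ η f a b ξ = f (φ (φ b)) (φ (φ a)) ξ := by
  simp only [L₂, hφξ, map_zero, (hf1 _ _).map_zero, hηξ]
  ring

theorem L₂_swap (x y z : V) : L₂ φ ξ η f x y z = L₂ φ ξ η f x z y := by
  simp only [L₂]
  ring

theorem isLinearMap_L₂_fst (hf2 : ∀ a c, IsLinearMap R (fun b => f a b c)) (y z : V) :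
    IsLinearMap R (fun x => L₂ φ ξ η f x y z) where
  map_add a b := by simp only [L₂, map_add, (hf2 _ _).map_add]; ring
  map_smul c a := by simp only [L₂, map_smul, (hf2 _ _).map_smul, smul_eq_mul]; ring

theorem isLinearMap_L₂_snd (hf1 : ∀ b c, IsLinearMap R (fun a => f a b c)) (x z : V) :
    IsLinearMap R (fun y => L₂ φ ξ η f x y z) where
  map_add a b := by simp only [L₂, map_add, (hf1 _ _).map_add]; ring
  map_smul c a := by simp only [L₂, map_smul, (hf1 _ _).map_smul, smul_eq_mul]; ring

theorem isLinearMap_L₂_thd (hf1 : ∀ b c, IsLinearMap R (fun a => f a b c)) (x y : V) :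
    IsLinearMap R (fun z => L₂ φ ξ η f x y z) where
  map_add a b := by simp only [L₂, map_add, (hf1 _ _).map_add]; ring
  map_smul c a := by simp only [L₂, map_smul, (hf1 _ _).map_smul, smul_eq_mul]; ring

theorem L₂_decompose (hφξ : φ ξ = 0) (hηφ : ∀ x, η (φ x) = 0) (hηξ : η ξ = 1)
    (hf1 : ∀ b c, IsLinearMap R (fun a => f a b c)) (x y z : V) :
    L₂ φ ξ η f x y z = L₂ φ ξ η f x (φ y) (φ z) + η y * L₂ φ ξ η f x ξ z
      + η z * L₂ φ ξ η f x y ξ := by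
  rw [L₂_swap _ ξ, L₂_apply_xi hφξ hηξ hf1, L₂_apply_xi hφξ hηξ hf1]
  simp only [L₂, hηφ]
  ring

variable (hφ2 : ∀ x, φ (φ x) = -x + η x • ξ) (hηφ : ∀ x, η (φ x) = 0)
  (hf1 : ∀ b c, IsLinearMap R (fun a => f a b c)) (hf2 : ∀ a c, IsLinearMap R (fun b => f a b c))
include hφ2 hηφ hf1 hf2

theorem apply_phi_four (a b c : V) :
    f (φ (φ (φ (φ a)))) (φ (φ (φ (φ b)))) c = f (φ (φ a)) (φ (φ b)) c := by
  rw [phi_phi_phi hφ2 hηφ, phi_phi_phi hφ2 hηφ, apply_neg_neg hf1 hf2]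

theorem L₂_apply_eq_W₂ (hφξ : φ ξ = 0) (hηξ : η ξ = 1) (x y z : V) :
    L₂ φ ξ η f x y z = η y * L₂ φ ξ η f (φ (φ x)) ξ (φ (φ z))
      + η z * L₂ φ ξ η f (φ (φ x)) (φ (φ y)) ξ := by
  rw [L₂_swap _ ξ, L₂_apply_xi hφξ hηξ hf1, L₂_apply_xi hφξ hηξ hf1,
    apply_phi_four hφ2 hηφ hf1 hf2, apply_phi_four hφ2 hηφ hf1 hf2]
  simp only [L₂]
  ring

theorem L₂_L₂_apply (hφξ : φ ξ = 0) (hηξ : η ξ = 1) (hfsymm : ∀ x y z, f x y z = f x z y)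
    (hfW : ∀ x y z, f x y z
      = η y * f (φ (φ x)) ξ (φ (φ z)) + η z * f (φ (φ x)) (φ (φ y)) ξ) (x y z : V) :
    L₂ φ ξ η (L₂ φ ξ η f) x y z = f x y z := by
  rw [L₂, L₂_apply_xi hφξ hηξ hf1, L₂_apply_xi hφξ hηξ hf1,
    apply_phi_four hφ2 hηφ hf1 hf2, apply_phi_four hφ2 hηφ hf1 hf2, hfW x y z, hfsymm _ ξ]
  ring

theorem L₁_L₂_comm (x y z : V) :
    L₁ φ ξ η (L₂ φ ξ η f) x y z = L₂ φ ξ η (L₁ φ ξ η f) x y z := by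
  simp only [L₁, L₂, phi_phi_phi hφ2 hηφ, apply_neg_neg hf1 hf2, hηφ]
  ring

end Trilinear

end AlmostContact

theorem L2_involution_commutes_general {V : Type*} [AddCommGroup V] [Module ℝ V]
    (φ : V →ₗ[ℝ] V) (ξ : V) (η : V →ₗ[ℝ] ℝ)
    (hφξ : φ ξ = 0) (hφ2 : ∀ x, φ (φ x) = -x + η x • ξ)
    (hηφ : ∀ x, η (φ x) = 0) (hηξ : η ξ = 1)
    (F : V → V → V → ℝ)
    (hF1 : ∀ y z, IsLinearMap ℝ (fun x => F x y z))
    (hF2 : ∀ x z, IsLinearMap ℝ (fun y => F x y z))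
    (hFsym : ∀ x y z, F x y z = F x z y)
    (hW2 : ∀ x y z, F x y z
      = η y * F (φ (φ x)) ξ (φ (φ z)) + η z * F (φ (φ x)) (φ (φ y)) ξ) :
    let L₁ : (V → V → V → ℝ) → (V → V → V → ℝ) :=
      fun f x y z => f (φ x) (φ y) ξ * η z + f (φ x) (φ z) ξ * η y
    let L₂ : (V → V → V → ℝ) → (V → V → V → ℝ) :=
      fun f x y z => f (φ (φ y)) (φ (φ x)) ξ * η z + f (φ (φ z)) (φ (φ x)) ξ * η y
    (∀ y z, IsLinearMap ℝ (fun x => L₂ F x y z)) ∧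
    (∀ x z, IsLinearMap ℝ (fun y => L₂ F x y z)) ∧
    (∀ x y, IsLinearMap ℝ (fun z => L₂ F x y z)) ∧
    (∀ x y z, L₂ F x y z = L₂ F x z y) ∧
    (∀ x y z, L₂ F x y z
      = L₂ F x (φ y) (φ z) + η y * L₂ F x ξ z + η z * L₂ F x y ξ) ∧
    (∀ x y z, L₂ F x y z
      = η y * L₂ F (φ (φ x)) ξ (φ (φ z)) + η z * L₂ F (φ (φ x)) (φ (φ y)) ξ) ∧
    (∀ x y z, L₂ (L₂ F) x y z = F x y z) ∧
    (∀ x y z, L₁ (L₂ F) x y z = L₂ (L₁ F) x y z) := by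
  open AlmostContact in
  exact ⟨isLinearMap_L₂_fst hF2, isLinearMap_L₂_snd hF1, isLinearMap_L₂_thd hF1, L₂_swap,
    L₂_decompose hφξ hηφ hηξ hF1, L₂_apply_eq_W₂ hφ2 hηφ hF1 hF2 hφξ hηξ,
    L₂_L₂_apply hφ2 hηφ hF1 hF2 hφξ hηξ hFsym hW2, L₁_L₂_comm hφ2 hηφ hF1 hF2⟩

/-- L₂(F)(x,y,z) = F(φ²y,φ²x,ξ)η(z) + F(φ²z,φ²x,ξ)η(y) maps W₂ to W₂, is an
involution on W₂, and commutes with L₁. -/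
theorem L2_involution_commutes {V : Type*} [AddCommGroup V] [Module ℝ V]
    (φ : V →ₗ[ℝ] V) (ξ : V) (η : V →ₗ[ℝ] ℝ)
    (hφξ : φ ξ = 0) (hφ2 : ∀ x, φ (φ x) = -x + η x • ξ)
    (hηφ : ∀ x, η (φ x) = 0) (hηξ : η ξ = 1)
    (F : V → V → V → ℝ)
    (hF1 : ∀ y z, IsLinearMap ℝ (fun x => F x y z))
    (hF2 : ∀ x z, IsLinearMap ℝ (fun y => F x y z))
    (hF3 : ∀ x y, IsLinearMap ℝ (fun z => F x y z))
    (hFsym : ∀ x y z, F x y z = F x z y)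
    (hFprop : ∀ x y z, F x y z = F x (φ y) (φ z) + η y * F x ξ z + η z * F x y ξ)
    (hW2 : ∀ x y z, F x y z
      = η y * F (φ (φ x)) ξ (φ (φ z)) + η z * F (φ (φ x)) (φ (φ y)) ξ) :
    let L₁ : (V → V → V → ℝ) → (V → V → V → ℝ) :=
      fun f x y z => f (φ x) (φ y) ξ * η z + f (φ x) (φ z) ξ * η y
    let L₂ : (V → V → V → ℝ) → (V → V → V → ℝ) :=
      fun f x y z => f (φ (φ y)) (φ (φ x)) ξ * η z + f (φ (φ z)) (φ (φ x)) ξ * η y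
    (∀ y z, IsLinearMap ℝ (fun x => L₂ F x y z)) ∧
    (∀ x z, IsLinearMap ℝ (fun y => L₂ F x y z)) ∧
    (∀ x y, IsLinearMap ℝ (fun z => L₂ F x y z)) ∧
    (∀ x y z, L₂ F x y z = L₂ F x z y) ∧
    (∀ x y z, L₂ F x y z
      = L₂ F x (φ y) (φ z) + η y * L₂ F x ξ z + η z * L₂ F x y ξ) ∧
    (∀ x y z, L₂ F x y z
      = η y * L₂ F (φ (φ x)) ξ (φ (φ z)) + η z * L₂ F (φ (φ x)) (φ (φ y)) ξ) ∧
    (∀ x y z, L₂ (L₂ F) x y z = F x y z) ∧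
    (∀ x y z, L₁ (L₂ F) x y z = L₂ (L₁ F) x y z) :=
  L2_involution_commutes_general φ ξ η hφξ hφ2 hηφ hηξ F hF1 hF2 hFsym hW2
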